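/- arXiv:2105.07185 — 3 statements merged into one kernel-verified Lean document; each statement's English description precedes it below -/
import Mathlib

section
/- Let R be a standard graded Noetherian ring of dimension d ≥ 2 whose degree-zero part R₀ = (A, 𝔪) is an Artinian local ring, such that 𝔭 = 𝔪R is a prime ideal of R. Let M be a finitely generated graded R-module generated in the single degree t with dim_R M = d and Ass_R M = Min_R M. If M admits a filtration of type (**) with shift t, that is, a chain of graded surjections M = M⁰ ↠ M¹ ↠ ⋯ ↠ M^{i₀} = 0 such that for each 0 ≤ i ≤ i₀−1 the kernel of M^i → M^{i+1} is isomorphic as a graded R-module to (R/𝔭)(−t), then e₁(M) = t·e₀(M) + ℓ_{R_𝔭}(M_𝔭)·e₁(R/𝔭). -/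
/-! Localizing the filtration at `𝔭` makes every step a step of a composition series, because
`(R/𝔭)_𝔭` is the residue field of `R_𝔭`; hence `ℓ(M_𝔭) = i₀`. In each degree `n` the filtration
has `i₀` subquotients isomorphic to `(R/𝔭)_{n-t}`, so `ℓ(M_n) = i₀ · ℓ((R/𝔭)_{n-t})`. Comparing
Hilbert polynomials gives `e₀(M) = i₀ e₀(R/𝔭)`, and the shift by `t` adds `t e₀(M)` to `e₁`. -/

open Filter IsLocalRing

/-- The length of a module, as an integer (the Krull dimension of its lattice of
submodules, i.e. the longest chain of submodules; `0` if infinite). -/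
noncomputable def moduleLength (R M : Type*) [Ring R] [AddCommGroup M] [Module R M] : ℤ :=
  ((WithBot.unbotD 0 (Order.krullDim (Submodule R M))).toNat : ℤ)

/-- The length of the localization `M_𝔭` over `R_𝔭`. -/
noncomputable def locLength (R : Type*) [CommRing R] (p : Ideal R) [p.IsPrime]
    (M : Type*) [AddCommGroup M] [Module R M] : ℤ :=
  moduleLength (Localization p.primeCompl) (LocalizedModule p.primeCompl M)

/-- An `R`-submodule `N` of a graded module `M` is graded if it contains all homogeneous
components of its elements. -/
def IsGradedSubmodule {A R M : Type*} [CommRing A] [CommRing R] [Algebra A R]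
    [AddCommGroup M] [Module A M] [Module R M]
    (ℳ : ℤ → Submodule A M) [DirectSum.Decomposition ℳ] (N : Submodule R M) : Prop :=
  ∀ x ∈ N, ∀ n : ℤ, ((DirectSum.decompose ℳ x n : ℳ n) : M) ∈ N

section

variable {A R M : Type*} [CommRing A] [CommRing R] [Algebra A R]
  [AddCommGroup M] [Module A M] [Module R M] [IsScalarTower A R M]

/-- `M` admits a filtration of type (**) with shift `t`: a chain of graded submodules
`⊥ = K 0 ≤ K 1 ≤ ⋯ ≤ K i₀ = ⊤` such that each quotient `K (i+1) / K i` is a cyclic graded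
module generated by a homogeneous element of degree `t` whose annihilator modulo `K i` is
exactly `p`; equivalently, `K (i+1) / K i ≅ (R/p)(−t)` as graded `R`-modules.
This chain of kernels is equivalent to the chain of graded surjections
`M = M⁰ ↠ M¹ ↠ ⋯ ↠ M^{i₀} = 0` with kernels `(R/p)(−t)`. -/
def HasTypeStarStarFiltration (ℳ : ℤ → Submodule A M) [DirectSum.Decomposition ℳ]
    (p : Ideal R) (t : ℤ) : Prop :=
  ∃ (i₀ : ℕ) (K : ℕ → Submodule R M) (x : ℕ → M),
    K 0 = ⊥ ∧ K i₀ = ⊤ ∧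
    ∀ i < i₀, IsGradedSubmodule ℳ (K i) ∧ x i ∈ ℳ t ∧
      K (i + 1) = K i ⊔ Submodule.span R {x i} ∧
      (∀ r : R, r • x i ∈ K i ↔ r ∈ p)

end

theorem moduleLength_eq_toNat_length (R M : Type*) [Ring R] [AddCommGroup M] [Module R M] :
    moduleLength R M = (Module.length R M).toNat := by
  rw [moduleLength, ← Module.coe_length, WithBot.unbotD_coe]

section Chain

variable {R X : Type*} [Ring R] [AddCommGroup X] [Module R X]

theorem Module.length_eq_nsmul_of_chain {k : ℕ} {C : ℕ → Submodule R X} {ℓ : ℕ∞}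
    (h0 : C 0 = ⊥) (hk : C k = ⊤) (hmono : ∀ i < k, C i ≤ C (i + 1))
    (hquot : ∀ i < k, Module.length R (C (i + 1) ⧸ (C i).comap (C (i + 1)).subtype) = ℓ) :
    Module.length R X = k • ℓ := by
  suffices h : ∀ i ≤ k, Module.length R (C i) = i • ℓ by
    rw [← h k le_rfl, hk, Module.length_top]
  intro i hi
  induction i with
  | zero => rw [zero_smul, h0, Module.length_bot]
  | succ i ih =>
    rw [succ_nsmul, ← ih (by omega), ← hquot i hi,
      Module.length_eq_add_of_exact _ _ (Submodule.injective_subtype _)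
        (Submodule.mkQ_surjective _)
        (LinearMap.exact_subtype_mkQ ((C i).comap (C (i + 1)).subtype)),
      (Submodule.comapSubtypeEquivOfLe (hmono i hi)).length_eq]

theorem Module.length_eq_of_covBy_chain {k : ℕ} {C : ℕ → Submodule R X} (h0 : C 0 = ⊥)
    (hk : C k = ⊤) (hcov : ∀ i < k, C i ⋖ C (i + 1)) : Module.length R X = k := by
  simpa using Module.length_eq_nsmul_of_chain h0 hk (fun i hi => (hcov i hi).le) fun i hi =>
    Module.length_eq_one_iff.mpr ((covBy_iff_quot_is_simple (hcov i hi).le).mp (hcov i hi))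

end Chain

open Submodule in
theorem IsLocalRing.covBy_sup_span_singleton {S N : Type*} [CommRing S] [IsLocalRing S]
    [AddCommGroup N] [Module S N] {L : Submodule S N} {y : N} (hy : y ∉ L)
    (hmax : ∀ a ∈ maximalIdeal S, a • y ∈ L) : L ⋖ L ⊔ span S {y} := by
  refine ⟨left_lt_sup.mpr (by simpa using hy), fun W hLW hWy => ?_⟩
  obtain ⟨w, hwW, hwL⟩ := SetLike.exists_of_lt hLW
  obtain ⟨l, hl, z, hz, rfl⟩ := mem_sup.mp (hWy.le hwW)
  obtain ⟨a, rfl⟩ := mem_span_singleton.mp hz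
  have ha : IsUnit a := by
    by_contra ha
    exact hwL (L.add_mem hl (hmax a ((mem_maximalIdeal a).mpr ha)))
  have hyW : y ∈ W := by
    have : a • y ∈ W := by simpa using W.sub_mem hwW (hLW.le hl)
    simpa [smul_smul] using W.smul_mem (ha.unit⁻¹ : Sˣ).val this
  exact hWy.not_ge (sup_le hLW.le ((span_singleton_le_iff_mem _ _).mpr hyW))

section Localization

variable {R S M M' : Type*} [CommRing R] [CommRing S] [Algebra R S]
  [AddCommGroup M] [Module R M] [AddCommGroup M'] [Module R M'] [Module S M']
  [IsScalarTower R S M'] {p : Ideal R} [p.IsPrime] [IsLocalization.AtPrime S p]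
  (f : M →ₗ[R] M') [IsLocalizedModule p.primeCompl f]

open Submodule in
theorem Submodule.localized'_covBy_sup_span_singleton {N : Submodule R M} {x : M}
    (hx : ∀ r : R, r • x ∈ N ↔ r ∈ p) :
    N.localized' S p.primeCompl f ⋖ (N ⊔ span R {x}).localized' S p.primeCompl f := by
  have : IsLocalRing S := IsLocalization.AtPrime.isLocalRing S p
  rw [(localized'gi S p.primeCompl f).gc.l_sup, localized'_span, Set.image_singleton]
  refine IsLocalRing.covBy_sup_span_singleton ?_ ?_
  · rintro ⟨m, hm, s, hms⟩
    rw [IsLocalizedModule.mk'_eq_iff, Submonoid.smul_def, ← map_smul] at hms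
    obtain ⟨u, hu⟩ := IsLocalizedModule.exists_of_eq (S := p.primeCompl) hms
    have : ((u * s : p.primeCompl) : R) • x ∈ N := by
      rw [Submonoid.coe_mul, mul_smul, ← Submonoid.smul_def, ← hu]
      exact N.smul_of_tower_mem u hm
    exact (u * s).2 ((hx _).mp this)
  · intro a ha
    obtain ⟨⟨r, s⟩, rfl⟩ := IsLocalization.mk'_surjective p.primeCompl a
    have hr : r ∈ p := by
      by_contra hr
      exact (mem_maximalIdeal _).mp ha ((IsLocalization.AtPrime.isUnit_mk'_iff S p r s).mpr hr)
    refine ⟨r • x, (hx r).mpr hr, s, ?_⟩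
    rw [← IsLocalizedModule.mk'_one p.primeCompl f x, IsLocalizedModule.mk'_smul_mk', mul_one]

end Localization

theorem locLength_eq_of_filtration {R M : Type*} [CommRing R] [AddCommGroup M] [Module R M]
    (p : Ideal R) [p.IsPrime] {i₀ : ℕ} {K : ℕ → Submodule R M} {x : ℕ → M}
    (hK0 : K 0 = ⊥) (hKtop : K i₀ = ⊤)
    (hstep : ∀ i < i₀, K (i + 1) = K i ⊔ Submodule.span R {x i} ∧
      ∀ r : R, r • x i ∈ K i ↔ r ∈ p) :
    locLength R p M = i₀ := by
  let C i := (K i).localized' (Localization p.primeCompl) p.primeCompl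
    (LocalizedModule.mkLinearMap p.primeCompl M)
  have hcov : ∀ i < i₀, C i ⋖ C (i + 1) := fun i hi => by
    simpa only [C, (hstep i hi).1] using
      Submodule.localized'_covBy_sup_span_singleton _ (hstep i hi).2
  rw [locLength, moduleLength_eq_toNat_length,
    Module.length_eq_of_covBy_chain (C := C) (by simp [C, hK0]) (by simp [C, hKtop]) hcov]
  simp

theorem DirectSum.coe_decompose_smul_of_mem {ι A R M σ : Type*} [AddGroup ι] [DecidableEq ι]
    [CommRing A] [CommRing R] [Algebra A R] [AddCommGroup M] [Module R M]
    (𝒜 : ι → Submodule A R) [DirectSum.Decomposition 𝒜] [SetLike σ M]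
    [AddSubgroupClass σ M] (ℳ : ι → σ) [SetLike.GradedSMul 𝒜 ℳ] [DirectSum.Decomposition ℳ]
    {t : ι} {x : M} (hx : x ∈ ℳ t) (r : R) (n : ι) :
    (DirectSum.decompose ℳ (r • x) n : M) = (DirectSum.decompose 𝒜 r (n - t) : R) • x := by
  induction r using DirectSum.Decomposition.inductionOn 𝒜 with
  | zero => simp
  | @homogeneous i a =>
    have ha : (a : R) • x ∈ ℳ (i + t) := SetLike.GradedSMul.smul_mem a.2 hx
    by_cases h : i + t = n
    · subst h
      rw [DirectSum.decompose_of_mem_same ℳ ha, add_sub_cancel_right,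
        DirectSum.decompose_of_mem_same 𝒜 a.2]
    · rw [DirectSum.decompose_of_mem_ne ℳ ha h,
        DirectSum.decompose_of_mem_ne 𝒜 a.2 (by rintro rfl; exact h (sub_add_cancel n t)),
        zero_smul]
  | add r r' hr hr' =>
    simp only [add_smul, DirectSum.decompose_add, DirectSum.add_apply, AddMemClass.coe_add,
      hr, hr']

section Graded

variable {A R M : Type*} [CommRing A] [CommRing R] [Algebra A R]
  [AddCommGroup M] [Module A M] [Module R M] [IsScalarTower A R M]
  (𝒜 : ℤ → Submodule A R) [DirectSum.Decomposition 𝒜]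
  (ℳ : ℤ → Submodule A M) [SetLike.GradedSMul 𝒜 ℳ] [DirectSum.Decomposition ℳ]

def Submodule.degreePart (N : Submodule R M) (n : ℤ) : Submodule A (ℳ n) :=
  (N.restrictScalars A).comap (ℳ n).subtype

open Submodule

theorem length_quotient_degreePart_sup_span_singleton {p : Ideal R} {t : ℤ} {N : Submodule R M}
    {x : M} (hN : IsGradedSubmodule ℳ N) (hx : x ∈ ℳ t) (hann : ∀ r : R, r • x ∈ N ↔ r ∈ p)
    (n : ℤ) :
    Module.length A ((N ⊔ span R {x}).degreePart ℳ n ⧸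
        (N.degreePart ℳ n).comap ((N ⊔ span R {x}).degreePart ℳ n).subtype) =
      Module.length A (𝒜 (n - t) ⧸ (p.restrictScalars A).comap (𝒜 (n - t)).subtype) := by
  set L := (N ⊔ span R {x}).degreePart ℳ n
  have hdeg (a : 𝒜 (n - t)) : (a : R) • x ∈ ℳ n := by
    simpa using SetLike.GradedSMul.smul_mem a.2 hx
  have hL (a : 𝒜 (n - t)) : (a : R) • x ∈ N ⊔ span R {x} :=
    mem_sup_right (mem_span_singleton.mpr ⟨a, rfl⟩)
  let h : 𝒜 (n - t) →ₗ[A] L :=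
    ((((LinearMap.toSpanSingleton R M x).restrictScalars A).comp (𝒜 (n - t)).subtype).codRestrict
      (ℳ n) hdeg).codRestrict L hL
  let g := ((N.degreePart ℳ n).comap L.subtype).mkQ ∘ₗ h
  have hker : LinearMap.ker g = (p.restrictScalars A).comap (𝒜 (n - t)).subtype := by
    ext a
    exact (Submodule.Quotient.mk_eq_zero _).trans (hann a)
  have hsurj : Function.Surjective g := by
    rintro ⟨⟨⟨m, hm⟩, hmL⟩⟩
    obtain ⟨k, hk, z, hz, rfl⟩ := mem_sup.mp hmL
    obtain ⟨r, rfl⟩ := mem_span_singleton.mp hz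
    refine ⟨DirectSum.decompose 𝒜 r (n - t), (Submodule.Quotient.eq _).mpr ?_⟩
    have hcomp : (DirectSum.decompose ℳ (k + r • x) n : M) = k + r • x :=
      DirectSum.decompose_of_mem_same ℳ hm
    rw [DirectSum.decompose_add, DirectSum.add_apply, Submodule.coe_add,
      DirectSum.coe_decompose_smul_of_mem 𝒜 ℳ hx] at hcomp
    change (DirectSum.decompose 𝒜 r (n - t) : R) • x - (k + r • x) ∈ N
    rw [← hcomp, sub_add_cancel_right]
    exact N.neg_mem (hN k hk n)
  rw [← hker, (g.quotKerEquivOfSurjective hsurj).length_eq]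

theorem moduleLength_eq_of_filtration {p : Ideal R} {t : ℤ} {i₀ : ℕ} {K : ℕ → Submodule R M}
    {x : ℕ → M} (hK0 : K 0 = ⊥) (hKtop : K i₀ = ⊤)
    (hstep : ∀ i < i₀, IsGradedSubmodule ℳ (K i) ∧ x i ∈ ℳ t ∧
      K (i + 1) = K i ⊔ span R {x i} ∧ ∀ r : R, r • x i ∈ K i ↔ r ∈ p) (n : ℤ) :
    moduleLength A (ℳ n) =
      i₀ * moduleLength A (𝒜 (n - t) ⧸ (p.restrictScalars A).comap (𝒜 (n - t)).subtype) := by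
  have hle : ∀ i < i₀, K i ≤ K (i + 1) := fun i hi => (hstep i hi).2.2.1 ▸ le_sup_left
  have hquot : ∀ i < i₀, Module.length A ((K (i + 1)).degreePart ℳ n ⧸
      ((K i).degreePart ℳ n).comap ((K (i + 1)).degreePart ℳ n).subtype) =
        Module.length A (𝒜 (n - t) ⧸ (p.restrictScalars A).comap (𝒜 (n - t)).subtype) := by
    intro i hi
    obtain ⟨hN, hx, hsup, hann⟩ := hstep i hi
    rw [hsup]
    exact length_quotient_degreePart_sup_span_singleton 𝒜 ℳ hN hx hann n
  rw [moduleLength_eq_toNat_length, moduleLength_eq_toNat_length,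
    Module.length_eq_nsmul_of_chain (C := fun i => (K i).degreePart ℳ n)
      (by simp [degreePart, hK0]) (by simp [degreePart, hKtop]) (fun i hi _ hm => hle i hi hm)
      hquot]
  simp

end Graded

def hilbertSum (k : ℕ) (e : ℕ → ℤ) (n : ℕ) : ℤ :=
  ∑ i ∈ Finset.range k, (-1 : ℤ) ^ i * e i * ((n + (k - 1 - i)).choose (k - 1 - i) : ℤ)

theorem hilbertSum_mul_left (k : ℕ) (c : ℤ) (e : ℕ → ℤ) (n : ℕ) :
    hilbertSum k (fun i => c * e i) n = c * hilbertSum k e n := by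
  simp only [hilbertSum, Finset.mul_sum]
  exact Finset.sum_congr rfl fun _ _ => by ring

theorem hilbertSum_two (e : ℕ → ℤ) (n : ℕ) : hilbertSum 2 e n = e 0 * (n + 1) - e 1 := by
  rw [hilbertSum, Finset.sum_range_succ, Finset.sum_range_one]
  norm_num [Nat.choose_one_right]
  ring

theorem hilbertSum_succ_sub (k : ℕ) (e : ℕ → ℤ) (n : ℕ) :
    hilbertSum (k + 1) e (n + 1) - hilbertSum (k + 1) e n = hilbertSum k e (n + 1) := by
  simp only [hilbertSum, Finset.sum_range_succ, Nat.add_sub_cancel, Nat.sub_self, add_zero,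
    Nat.choose_zero_right]
  rw [add_sub_add_right_eq_sub, ← Finset.sum_sub_distrib]
  refine Finset.sum_congr rfl fun i hi => ?_
  obtain ⟨j, hj⟩ : ∃ j, k - 1 - i = j := ⟨_, rfl⟩
  have hj' : k - i = j + 1 := by have := Finset.mem_range.mp hi; omega
  rw [hj, hj', ← mul_sub, show n + 1 + (j + 1) = n + 1 + j + 1 by ring,
    show n + (j + 1) = n + 1 + j by ring, Nat.choose_succ_succ', Nat.cast_add,
    add_sub_cancel_right]

theorem hilbertSum_shift_coeffs {k : ℕ} (hk : 2 ≤ k) {e e' : ℕ → ℤ} {t : ℤ}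
    (h : ∀ᶠ m : ℕ in atTop, hilbertSum k e ((m : ℤ) + t).toNat = hilbertSum k e' m) :
    e 0 = e' 0 ∧ e 1 = e' 1 + t * e' 0 := by
  induction k, hk using Nat.le_induction with
  | base =>
    obtain ⟨N, hN⟩ := eventually_atTop.mp h
    have hlin (j : ℕ) : e 0 * ((N + t.natAbs + j : ℕ) + t + 1) - e 1 =
        e' 0 * ((N + t.natAbs + j : ℕ) + 1) - e' 1 := by
      have := hN (N + t.natAbs + j) (by omega)
      rwa [hilbertSum_two, hilbertSum_two, Int.toNat_of_nonneg (by omega)] at this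
    have h0 := hlin 0
    have h1 := hlin 1
    push_cast at h0 h1
    have he0 : e 0 = e' 0 := by linear_combination h1 - h0
    exact ⟨he0, by linear_combination -h0 + (N + |t| + t + 1) * he0⟩
  | succ k hk ih =>
    refine ih ?_
    obtain ⟨N, hN⟩ := eventually_atTop.mp h
    refine eventually_atTop.mpr ⟨N + t.natAbs + 1, fun m hm => ?_⟩
    obtain ⟨m, rfl⟩ : ∃ m', m = m' + 1 := ⟨m - 1, by omega⟩
    have hT : ((↑(m + 1) : ℤ) + t).toNat = ((m : ℤ) + t).toNat + 1 := by omega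
    rw [hT, ← hilbertSum_succ_sub k e, ← hilbertSum_succ_sub k e', ← hT, hN _ (by omega),
      hN _ (by omega)]

theorem stmt1_general {A R M : Type*} [CommRing A] [IsLocalRing A]
    [CommRing R] [Algebra A R]
    (𝒜 : ℤ → Submodule A R) [GradedAlgebra 𝒜]
    -- `dim R = d ≥ 2`:
    (d : ℕ) (hd2 : 2 ≤ d)
    -- `𝔭 = 𝔪R` is a prime ideal:
    [hp : (Ideal.map (algebraMap A R) (maximalIdeal A)).IsPrime]
    -- `M` is a finitely generated graded `R`-module:
    [AddCommGroup M] [Module A M] [Module R M] [IsScalarTower A R M]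
    (ℳ : ℤ → Submodule A M) [SetLike.GradedSMul 𝒜 ℳ] [DirectSum.Decomposition ℳ]
    (t : ℤ)
    -- the Hilbert coefficients of `M` and of `R/𝔭`:
    (eM eP : ℕ → ℤ)
    (hM : ∀ᶠ n : ℕ in atTop, moduleLength A (ℳ (n : ℤ)) =
      ∑ i ∈ Finset.range d, (-1 : ℤ) ^ i * eM i * ((n + (d - 1 - i)).choose (d - 1 - i) : ℤ))
    (hP : ∀ᶠ n : ℕ in atTop,
      moduleLength A (↥(𝒜 (n : ℤ)) ⧸ Submodule.comap (𝒜 (n : ℤ)).subtype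
        ((Ideal.map (algebraMap A R) (maximalIdeal A)).restrictScalars A)) =
      ∑ i ∈ Finset.range d, (-1 : ℤ) ^ i * eP i * ((n + (d - 1 - i)).choose (d - 1 - i) : ℤ))
    -- `M` admits a filtration of type (**) with shift `t`:
    (hfil : HasTypeStarStarFiltration ℳ (Ideal.map (algebraMap A R) (maximalIdeal A)) t) :
    eM 1 = t * eM 0 + locLength R (Ideal.map (algebraMap A R) (maximalIdeal A)) M * eP 1 := by
  obtain ⟨i₀, K, x, hK0, hKtop, hstep⟩ := hfil
  have hloc := locLength_eq_of_filtration _ hK0 hKtop fun i hi => (hstep i hi).2.2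
  have hdeg := moduleLength_eq_of_filtration 𝒜 ℳ hK0 hKtop hstep
  have hM' : ∀ᶠ n : ℕ in atTop, moduleLength A (ℳ n) = hilbertSum d eM n := hM
  have hP' : ∀ᶠ n : ℕ in atTop, moduleLength A (𝒜 n ⧸ Submodule.comap (𝒜 n).subtype
      ((Ideal.map (algebraMap A R) (maximalIdeal A)).restrictScalars A)) = hilbertSum d eP n := hP
  have htend : Tendsto (fun m : ℕ => ((m : ℤ) + t).toNat) atTop atTop :=
    tendsto_atTop_atTop.mpr fun b => ⟨b + t.natAbs, fun m hm => by omega⟩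
  have hshift : ∀ᶠ m : ℕ in atTop,
      hilbertSum d eM ((m : ℤ) + t).toNat = hilbertSum d (fun i => i₀ * eP i) m := by
    filter_upwards [htend.eventually hM', hP', eventually_ge_atTop t.natAbs] with m hMm hPm hm
    rw [hilbertSum_mul_left, ← hMm, ← hPm, hdeg,
      show (((m : ℤ) + t).toNat : ℤ) - t = m by omega]
  obtain ⟨he0, he1⟩ := hilbertSum_shift_coeffs hd2 hshift
  rw [he1, he0, hloc]
  ring

/-- **Theorem 1(b), (ii) ⇒ (i)**: if `M` admits a filtration of type (**) with shift `t`,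
then `e₁(M) = t·e₀(M) + ℓ_{R_𝔭}(M_𝔭)·e₁(R/𝔭)`. -/
theorem stmt1 {A R M : Type*} [CommRing A] [IsArtinianRing A] [IsLocalRing A]
    [CommRing R] [Algebra A R] [IsNoetherianRing R]
    (𝒜 : ℤ → Submodule A R) [GradedAlgebra 𝒜]
    -- `R` is non-negatively graded with degree-zero part `A`, standard graded:
    (hneg : ∀ n < 0, 𝒜 n = ⊥) (h0 : 𝒜 0 = 1)
    (hstd : ∀ n : ℤ, 0 ≤ n → 𝒜 (n + 1) = 𝒜 1 * 𝒜 n)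
    -- `dim R = d ≥ 2`:
    (d : ℕ) (hd2 : 2 ≤ d) (hdimR : ringKrullDim R = d)
    -- `𝔭 = 𝔪R` is a prime ideal:
    [hp : (Ideal.map (algebraMap A R) (maximalIdeal A)).IsPrime]
    -- `M` is a finitely generated graded `R`-module:
    [AddCommGroup M] [Module A M] [Module R M] [IsScalarTower A R M] [Module.Finite R M]
    (ℳ : ℤ → Submodule A M) [SetLike.GradedSMul 𝒜 ℳ] [DirectSum.Decomposition ℳ]
    -- `M` is generated in single degree `t`:
    (t : ℤ) (hgen : Submodule.span R (ℳ t : Set M) = ⊤)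
    -- `dim_R M = d` and `Ass_R M = Min_R M`:
    (hdimM : ringKrullDim (R ⧸ Module.annihilator R M) = d)
    (hAss : associatedPrimes R M = (Module.annihilator R M).minimalPrimes)
    -- the Hilbert coefficients of `M` and of `R/𝔭`:
    (eM eP : ℕ → ℤ)
    (hM : ∀ᶠ n : ℕ in atTop, moduleLength A (ℳ (n : ℤ)) =
      ∑ i ∈ Finset.range d, (-1 : ℤ) ^ i * eM i * ((n + (d - 1 - i)).choose (d - 1 - i) : ℤ))
    (hP : ∀ᶠ n : ℕ in atTop,
      moduleLength A (↥(𝒜 (n : ℤ)) ⧸ Submodule.comap (𝒜 (n : ℤ)).subtype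
        ((Ideal.map (algebraMap A R) (maximalIdeal A)).restrictScalars A)) =
      ∑ i ∈ Finset.range d, (-1 : ℤ) ^ i * eP i * ((n + (d - 1 - i)).choose (d - 1 - i) : ℤ))
    -- `M` admits a filtration of type (**) with shift `t`:
    (hfil : HasTypeStarStarFiltration ℳ (Ideal.map (algebraMap A R) (maximalIdeal A)) t) :
    eM 1 = t * eM 0 + locLength R (Ideal.map (algebraMap A R) (maximalIdeal A)) M * eP 1 :=
  stmt1_general 𝒜 d hd2 (hp := hp) ℳ t eM eP hM hP hfil
end

section
/- Let R = ⊕_{n≥0} R_n be a standard graded Noetherian ring whose degree-zero part R₀ = (A, 𝔪) is an Artinian local ring, such that 𝔭 = 𝔪R is a prime ideal of R, and let M be a finitely generated graded R-module with Ass_R M = {𝔭}. If M_t ≠ 0 for some integer t, then there exists a homogeneous element x ∈ M_t whose annihilator (0 :_R x) equals 𝔭; equivalently, there is an injective degree-preserving graded R-homomorphism (R/𝔭)(−t) → M. -/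
/-!
Since `𝔪` is nilpotent, multiplying a nonzero element of `M_t` by suitable elements of `𝔪`
yields a nonzero `x ∈ M_t` killed by `𝔪`, hence by `𝔭 = 𝔪R`. The annihilator of `x` lies in
some associated prime of `M`, which can only be `𝔭`.
-/

open IsLocalRing

namespace Submodule

variable {A M : Type*} [CommRing A] [AddCommGroup M] [Module A M]

theorem exists_ne_zero_forall_smul_eq_zero_of_pow_smul_eq_zero (N : Submodule A M)
    (I : Ideal A) (n : ℕ) {z : M} (hz : z ∈ N) (hz0 : z ≠ 0)
    (hkill : ∀ a ∈ I ^ n, a • z = 0) : ∃ x ∈ N, x ≠ 0 ∧ ∀ a ∈ I, a • x = 0 := by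
  induction n generalizing z with
  | zero => exact absurd (by simpa using hkill 1 (by simp)) hz0
  | succ n ih =>
    by_cases h : ∀ a ∈ I, a • z = 0
    · exact ⟨z, hz, hz0, h⟩
    push Not at h
    obtain ⟨a, ha, haz⟩ := h
    refine ih (N.smul_mem a hz) haz fun b hb => ?_
    rw [smul_smul]
    exact hkill _ (pow_succ I n ▸ Ideal.mul_mem_mul hb ha)

theorem exists_ne_zero_forall_smul_eq_zero_of_isNilpotent {N : Submodule A M} (hN : N ≠ ⊥)
    {I : Ideal A} (hI : IsNilpotent I) : ∃ x ∈ N, x ≠ 0 ∧ ∀ a ∈ I, a • x = 0 := by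
  obtain ⟨z, hz, hz0⟩ := (Submodule.ne_bot_iff N).mp hN
  obtain ⟨n, hn⟩ := hI
  refine N.exists_ne_zero_forall_smul_eq_zero_of_pow_smul_eq_zero I n hz hz0 fun a ha => ?_
  rw [hn, Ideal.zero_eq_bot, Ideal.mem_bot] at ha
  rw [ha, zero_smul]

end Submodule

theorem Ideal.map_le_annihilator_span_singleton {A R M : Type*} [CommRing A] [CommRing R]
    [Algebra A R] [AddCommGroup M] [Module A M] [Module R M] [IsScalarTower A R M]
    {I : Ideal A} {x : M} (h : ∀ a ∈ I, a • x = 0) :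
    I.map (algebraMap A R) ≤ (R ∙ x).annihilator :=
  Ideal.map_le_iff_le_comap.mpr fun a ha => by
    rw [Ideal.mem_comap, Submodule.mem_annihilator_span_singleton, algebraMap_smul]
    exact h a ha

theorem annihilator_span_singleton_eq_of_associatedPrimes_eq_singleton {R M : Type*}
    [CommRing R] [IsNoetherianRing R] [AddCommGroup M] [Module R M] {p : Ideal R}
    (hAss : associatedPrimes R M = {p}) {x : M} (hx : x ≠ 0)
    (hle : p ≤ (R ∙ x).annihilator) : (R ∙ x).annihilator = p := by
  refine le_antisymm (fun r hr => ?_) hle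
  obtain ⟨P, hP, hxP⟩ := exists_le_isAssociatedPrime_of_isNoetherianRing R x hx
  have hPp : P = p := by
    simpa [hAss] using (show P ∈ associatedPrimes R M from hP)
  rw [Submodule.mem_annihilator_span_singleton] at hr
  rw [← hPp]
  exact hxP (Submodule.mem_colon_singleton.mpr (hr ▸ Submodule.zero_mem _))

theorem stmt4_general {A R M : Type*} [CommRing A] [IsArtinianRing A] [IsLocalRing A]
    [CommRing R] [Algebra A R] [IsNoetherianRing R]
    -- `M` is a finitely generated graded `R`-module:
    [AddCommGroup M] [Module A M] [Module R M] [IsScalarTower A R M]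
    (ℳ : ℤ → Submodule A M)
    -- `Ass_R M = {𝔭}`:
    (hAss : associatedPrimes R M = {Ideal.map (algebraMap A R) (maximalIdeal A)})
    -- `M_t ≠ 0`:
    (t : ℤ) (ht : ℳ t ≠ ⊥) :
    ∃ x : M, x ∈ ℳ t ∧
      ∀ r : R, r • x = 0 ↔ r ∈ Ideal.map (algebraMap A R) (maximalIdeal A) := by
  obtain ⟨x, hxt, hx0, hx𝔪⟩ := Submodule.exists_ne_zero_forall_smul_eq_zero_of_isNilpotent ht
    ((isArtinianRing_iff_isNilpotent_maximalIdeal A).mp ‹_›)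
  refine ⟨x, hxt, fun r => ?_⟩
  rw [← Submodule.mem_annihilator_span_singleton,
    annihilator_span_singleton_eq_of_associatedPrimes_eq_singleton hAss hx0
      (Ideal.map_le_annihilator_span_singleton hx𝔪)]

/-- **Lemma 2.4**: if `Ass_R M = {𝔭}` (where `𝔭 = 𝔪R`) and `M_t ≠ 0`, then there is a
homogeneous element `x ∈ M_t` with `(0 :_R x) = 𝔭`; equivalently there is an injective
degree-preserving graded homomorphism `(R/𝔭)(−t) → M`. -/
theorem stmt4 {A R M : Type*} [CommRing A] [IsArtinianRing A] [IsLocalRing A]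
    [CommRing R] [Algebra A R] [IsNoetherianRing R]
    (𝒜 : ℤ → Submodule A R) [GradedAlgebra 𝒜]
    -- `R` is non-negatively graded with degree-zero part `A`, standard graded:
    (hneg : ∀ n < 0, 𝒜 n = ⊥) (h0 : 𝒜 0 = 1)
    (hstd : ∀ n : ℤ, 0 ≤ n → 𝒜 (n + 1) = 𝒜 1 * 𝒜 n)
    -- `𝔭 = 𝔪R` is a prime ideal:
    [hp : (Ideal.map (algebraMap A R) (maximalIdeal A)).IsPrime]
    -- `M` is a finitely generated graded `R`-module:
    [AddCommGroup M] [Module A M] [Module R M] [IsScalarTower A R M] [Module.Finite R M]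
    (ℳ : ℤ → Submodule A M) [SetLike.GradedSMul 𝒜 ℳ] [DirectSum.Decomposition ℳ]
    -- `Ass_R M = {𝔭}`:
    (hAss : associatedPrimes R M = {Ideal.map (algebraMap A R) (maximalIdeal A)})
    -- `M_t ≠ 0`:
    (t : ℤ) (ht : ℳ t ≠ ⊥) :
    ∃ x : M, x ∈ ℳ t ∧
      ∀ r : R, r • x = 0 ↔ r ∈ Ideal.map (algebraMap A R) (maximalIdeal A) :=
  stmt4_general ℳ hAss t ht
end

section
/- Let A = K[[X, Y]] be the formal power series ring over a field K with maximal ideal 𝔪 = (X, Y). Let 0 = n₁ < n₂ < ⋯ < n_s = t be integers and let I be the ideal generated by the monomials X^{n_i} Y^{t−n_i} for 1 ≤ i ≤ s (so Y^t, X^t ∈ I). Then Q = (X^t, Y^t) is a reduction of I. Furthermore, if Q ⊊ I ⊊ 𝔪^t and I² = 𝔪^{2t}, then red_Q I = 2. -/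
open Filter IsLocalRing

/-- The length `ℓ_A(N/(P ∩ N))` of the subquotient of two ideals; for `P ≤ N` this is
`ℓ_A(N/P)`. -/
noncomputable def quotLength {A : Type*} [CommRing A] (N P : Ideal A) : ℤ :=
  moduleLength A (↥N ⧸ Submodule.comap N.subtype P)

/-- There is a regular sequence of length `n` on the ring `T` consisting of elements
of the ideal `J`.  For a Noetherian ring `T` and a proper ideal `J` this says exactly
that `depth_J T ≥ n`. -/
def ExistsRegSeq (T : Type*) [CommRing T] (J : Ideal T) (n : ℕ) : Prop :=
  ∃ rs : List T, rs.length = n ∧ (∀ z ∈ rs, z ∈ J) ∧ RingTheory.Sequence.IsRegular T rs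

/-- The reduction number `red_Q I`: the least `n` with `I^(n+1) = Q·Iⁿ`. -/
noncomputable def redNum {A : Type*} [CommRing A] (Q I : Ideal A) : ℕ :=
  sInf {n : ℕ | I ^ (n + 1) = Q * I ^ n}

/-- The ideal `I·ℛ(I)` of the Rees algebra `ℛ(I)`. -/
noncomputable def reesIdeal {A : Type*} [CommRing A] (I : Ideal A) : Ideal (reesAlgebra I) :=
  I.map (algebraMap A (reesAlgebra I))

/-- The associated graded ring `𝒢(I) = ℛ(I)/I·ℛ(I) ≅ ⊕_{n≥0} Iⁿ/I^{n+1}`. -/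
abbrev AssocGradedRing {A : Type*} [CommRing A] (I : Ideal A) :=
  reesAlgebra I ⧸ reesIdeal I

/-- The graded maximal ideal `𝓜 = 𝔪𝒢(I) + 𝒢(I)₊` of the associated graded ring,
the image of `𝔪ℛ(I) + ℛ(I)₊` (the latter being generated by the elements `a·t`, `a ∈ I`,
of degree one). -/
noncomputable def grMaxIdeal {A : Type*} [CommRing A] [IsLocalRing A] (I : Ideal A) :
    Ideal (AssocGradedRing I) :=
  Ideal.map (Ideal.Quotient.mk (reesIdeal I))
    ((maximalIdeal A).map (algebraMap A (reesAlgebra I)) ⊔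
      Ideal.span {x : reesAlgebra I | ∃ a ∈ I, (x : Polynomial A) = Polynomial.C a * Polynomial.X})

/-- `z` is integral over the ideal `I`: it satisfies an equation
`zⁿ + a₁z^{n−1} + ⋯ + aₙ = 0` with `aᵢ ∈ Iⁱ`. -/
def IsIntegralOverIdeal {A : Type*} [CommRing A] (I : Ideal A) (z : A) : Prop :=
  ∃ (n : ℕ) (a : ℕ → A), 0 < n ∧ (∀ i, 1 ≤ i → i ≤ n → a i ∈ I ^ i) ∧
    z ^ n + ∑ i ∈ Finset.Icc 1 n, a i * z ^ (n - i) = 0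

/-- The ideal `I` is integrally closed (it contains every element integral over it). -/
def IsIntegrallyClosedIdeal {A : Type*} [CommRing A] (I : Ideal A) : Prop :=
  ∀ z : A, IsIntegralOverIdeal I z → z ∈ I

/-!
Every generator `g = X^a Y^(t-a)` of `I` satisfies `g^(t+1) ∈ Q·I^t`, because
`g^t = (X^t)^a (Y^t)^(t-a)`. Expanding powers of a sum of ideals binomially, an ideal whose
finitely many generators all satisfy such an equation has `Q` as a reduction.

For the reduction number, `I³ = 𝔪^{2t}·I ⊆ 𝔪^{3t} = Q·𝔪^{2t} = Q·I²`, while `I ≠ Q`.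
If `I² = Q·I`, pick a monomial `X^a Y^(t-a) ∉ I` of `𝔪^t`; then
`X^t·X^a Y^(t-a) ∈ 𝔪^{2t} = X^t·I + Y^t·I`, and since `X^t, Y^t` is a regular sequence this
forces `X^a Y^(t-a) ∈ I`.
-/

namespace Ideal

variable {R : Type*} [CommRing R] {Q I J L : Ideal R}

theorem pow_mul_le_mul_pow {a i k : ℕ} (hJI : J ≤ I) (hLI : L ≤ I)
    (hJ : J ^ (a + 1) ≤ Q * I ^ a) (hi : a + 1 ≤ i) : J ^ i * L ^ k ≤ Q * I ^ (i + k - 1) := by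
  obtain ⟨j, rfl⟩ := Nat.exists_eq_add_of_le hi
  calc J ^ (a + 1 + j) * L ^ k = J ^ (a + 1) * (J ^ j * L ^ k) := by rw [pow_add, mul_assoc]
    _ ≤ Q * I ^ a * (I ^ j * I ^ k) := by gcongr
    _ = Q * I ^ (a + 1 + j + k - 1) := by
      rw [mul_assoc, ← pow_add, ← pow_add]; congr 2; omega

theorem sup_pow_add_succ_le {a b : ℕ} (hJI : J ≤ I) (hLI : L ≤ I)
    (hJ : J ^ (a + 1) ≤ Q * I ^ a) (hL : L ^ (b + 1) ≤ Q * I ^ b) :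
    (J ⊔ L) ^ (a + b + 1) ≤ Q * I ^ (a + b) := by
  rw [← add_eq_sup, add_pow, sum_eq_sup]
  refine Finset.sup_le fun i hi => mul_le_left.trans ?_
  rw [Finset.mem_range] at hi
  by_cases hai : a + 1 ≤ i
  · have := pow_mul_le_mul_pow (k := a + b + 1 - i) hJI hLI hJ hai
    rwa [show i + (a + b + 1 - i) - 1 = a + b by omega] at this
  · have := pow_mul_le_mul_pow (i := a + b + 1 - i) (k := i) hLI hJI hL (by omega)
    rwa [mul_comm, show a + b + 1 - i + i - 1 = a + b by omega] at this

theorem finset_sup_pow_succ_le {ι : Type*} (s : Finset ι) (J : ι → Ideal R) (a : ι → ℕ)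
    (hJI : ∀ i ∈ s, J i ≤ I) (hJ : ∀ i ∈ s, J i ^ (a i + 1) ≤ Q * I ^ a i) :
    s.sup J ^ (∑ i ∈ s, a i + 1) ≤ Q * I ^ (∑ i ∈ s, a i) := by
  classical
  induction s using Finset.induction_on with
  | empty => simp
  | insert i s his ih =>
    rw [Finset.sup_insert, Finset.sum_insert his]
    simp only [Finset.forall_mem_insert] at hJI hJ
    exact sup_pow_add_succ_le hJI.1 (Finset.sup_le hJI.2) hJ.1 (ih hJI.2 hJ.2)

theorem span_range_pow_succ_eq_mul {ι : Type*} [Fintype ι] (g : ι → R) (m : ℕ)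
    (hQ : Q ≤ span (Set.range g)) (hg : ∀ i, g i ^ (m + 1) ∈ Q * span (Set.range g) ^ m) :
    span (Set.range g) ^ (Fintype.card ι * m + 1) =
      Q * span (Set.range g) ^ (Fintype.card ι * m) := by
  refine le_antisymm ?_ ((mul_mono_left hQ).trans_eq (pow_succ' _ _).symm)
  have hsup : span (Set.range g) = Finset.univ.sup fun i => span {g i} := by
    rw [Finset.sup_univ_eq_iSup]; exact Submodule.span_range_eq_iSup
  have := finset_sup_pow_succ_le (I := span (Set.range g)) Finset.univ (fun i => span {g i})
    (fun _ => m) (fun i _ => span_le.mpr (by simp [subset_span (Set.mem_range_self i)]))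
    (fun i _ => by rw [span_singleton_pow, span_singleton_le_iff_mem]; exact hg i)
  rwa [← hsup, Finset.sum_const, Finset.card_univ, smul_eq_mul] at this

theorem monomial_pow_succ_mem_span_pow_pair_mul {x y : R} {t a : ℕ} (ha : a ≤ t)
    (hx : x ^ t ∈ I) (hy : y ^ t ∈ I) (hg : x ^ a * y ^ (t - a) ∈ I) :
    (x ^ a * y ^ (t - a)) ^ (t + 1) ∈ span {x ^ t, y ^ t} * I ^ t := by
  rcases a with _ | a
  · rw [pow_zero, one_mul, Nat.sub_zero, pow_succ']
    exact mul_mem_mul (subset_span (by simp)) (pow_mem_pow hy t)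
  · have hrest :
        (x ^ t) ^ a * (y ^ t) ^ (t - (a + 1)) * (x ^ (a + 1) * y ^ (t - (a + 1))) ∈ I ^ t := by
      have := mul_mem_mul (mul_mem_mul (pow_mem_pow hx a) (pow_mem_pow hy (t - (a + 1)))) hg
      rwa [← pow_add, ← pow_succ, show a + (t - (a + 1)) + 1 = t by omega] at this
    have := mul_mem_mul (subset_span (by simp) : x ^ t ∈ span {x ^ t, y ^ t}) hrest
    convert this using 1
    ring

theorem span_pair_pow_le_iff {x y : R} {n : ℕ} :
    span {x, y} ^ n ≤ J ↔ ∀ a ≤ n, x ^ a * y ^ (n - a) ∈ J := by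
  refine ⟨fun h a ha => h ?_, fun h => ?_⟩
  · rw [← Nat.add_sub_cancel' ha, pow_add, Nat.add_sub_cancel_left]
    exact mul_mem_mul (pow_mem_pow (subset_span (by simp)) a)
      (pow_mem_pow (subset_span (by simp)) (n - a))
  · rw [span_insert, ← add_eq_sup, add_pow, sum_eq_sup]
    refine Finset.sup_le fun a ha => mul_le_left.trans ?_
    rw [span_singleton_pow, span_singleton_pow, span_singleton_mul_span_singleton,
      span_singleton_le_iff_mem]
    exact h a (Nat.lt_succ_iff.mp (Finset.mem_range.mp ha))

theorem span_pair_pow_add_le_mul {x y : R} {t j : ℕ} (h : t ≤ j + 1) :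
    span {x, y} ^ (t + j) ≤ span {x ^ t, y ^ t} * span {x, y} ^ j := by
  refine span_pair_pow_le_iff.mpr fun a ha => ?_
  by_cases hta : t ≤ a
  · have hmem := span_pair_pow_le_iff.mp (le_refl (span {x, y} ^ j)) (a - t) (by omega)
    have := mul_mem_mul (subset_span (by simp) : x ^ t ∈ span {x ^ t, y ^ t}) hmem
    rwa [← mul_assoc, ← pow_add, Nat.add_sub_cancel' hta, show j - (a - t) = t + j - a by omega]
      at this
  · have hmem := span_pair_pow_le_iff.mp (le_refl (span {x, y} ^ j)) a (by omega)
    have := mul_mem_mul (subset_span (by simp) : y ^ t ∈ span {x ^ t, y ^ t}) hmem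
    rw [show t + j - a = t + (j - a) by omega, pow_add]
    convert this using 1
    ring

theorem mem_of_mul_mem_span_pair_mul {a b f : R} (hb : b ∈ J) (hab : ∀ v, b ∣ a * v → b ∣ v)
    (h : a * f ∈ span {a, b} * J) : f ∈ J := by
  rw [span_insert, sup_mul, Submodule.mem_sup] at h
  obtain ⟨_, hau, _, hbv, huv⟩ := h
  obtain ⟨u, hu, rfl⟩ := mem_span_singleton_mul.mp hau
  obtain ⟨v, -, rfl⟩ := mem_span_singleton_mul.mp hbv
  obtain ⟨w, hw⟩ := hab (f - u) ⟨v, by linear_combination -huv⟩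
  rw [show f = u + b * w by linear_combination hw]
  exact add_mem hu (mul_mem_right w J hb)

end Ideal

theorem MvPowerSeries.X_pow_dvd_of_dvd_X_pow_mul {σ R : Type*} [Semiring R] {i j : σ}
    (hij : i ≠ j) {m n : ℕ} {φ : MvPowerSeries σ R} (h : X i ^ m ∣ X j ^ n * φ) : X i ^ m ∣ φ := by
  classical
  rw [X_pow_dvd_iff] at h ⊢
  intro d hd
  have := h (Finsupp.single j n + d) (by simpa [Finsupp.single_apply, hij.symm] using hd)
  rwa [X_pow_eq, coeff_add_monomial_mul, one_mul] at this

theorem redNum_eq_of_forall_lt {A : Type*} [CommRing A] {Q I : Ideal A} {k : ℕ}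
    (hk : I ^ (k + 1) = Q * I ^ k) (hlt : ∀ j < k, I ^ (j + 1) ≠ Q * I ^ j) : redNum Q I = k :=
  le_antisymm (Nat.sInf_le hk) <| not_lt.mp fun h =>
    hlt _ h (Nat.sInf_mem (s := {n | I ^ (n + 1) = Q * I ^ n}) ⟨k, hk⟩)

open MvPowerSeries in
/-- **Lemma 3.6(b)**: let `A = K[[X, Y]]` with maximal ideal `𝔪 = (X, Y)`, let
`0 = n₁ < n₂ < ⋯ < n_s = t` and let `I = (X^{nᵢ}·Y^{t−nᵢ} : 1 ≤ i ≤ s)`.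
Then `Q = (X^t, Y^t)` is a reduction of `I`; moreover if `Q ⊊ I ⊊ 𝔪^t` and
`I² = 𝔪^{2t}`, then `red_Q I = 2`. -/
theorem stmt16 {K : Type*} [Field K] (s t : ℕ) (hs : 0 < s)
    (n : Fin s → ℕ) (hmono : StrictMono n)
    (h0 : n ⟨0, hs⟩ = 0) (hlast : n ⟨s - 1, Nat.sub_lt hs Nat.one_pos⟩ = t)
    (I : Ideal (MvPowerSeries (Fin 2) K))
    (hI : I = Ideal.span (Set.range fun i : Fin s =>
      (X 0 : MvPowerSeries (Fin 2) K) ^ n i * (X 1 : MvPowerSeries (Fin 2) K) ^ (t - n i)))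
    (Q : Ideal (MvPowerSeries (Fin 2) K))
    (hQ : Q = Ideal.span {(X 0 : MvPowerSeries (Fin 2) K) ^ t,
      (X 1 : MvPowerSeries (Fin 2) K) ^ t}) :
    (∃ k : ℕ, I ^ (k + 1) = Q * I ^ k) ∧
    (Q < I →
      I < (Ideal.span {(X 0 : MvPowerSeries (Fin 2) K), (X 1 : MvPowerSeries (Fin 2) K)}) ^ t →
      I ^ 2 =
        (Ideal.span {(X 0 : MvPowerSeries (Fin 2) K), (X 1 : MvPowerSeries (Fin 2) K)}) ^ (2 * t) →
      redNum Q I = 2) := by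
  have hn (i : Fin s) : n i ≤ t := hlast ▸ hmono.monotone (Fin.mk_le_mk.mpr (by omega))
  have hgI (i : Fin s) : (X 0 : MvPowerSeries (Fin 2) K) ^ n i * X 1 ^ (t - n i) ∈ I :=
    hI ▸ Ideal.subset_span ⟨i, rfl⟩
  have hxI : (X 0 : MvPowerSeries (Fin 2) K) ^ t ∈ I := by
    simpa [hlast] using hgI ⟨s - 1, Nat.sub_lt hs Nat.one_pos⟩
  have hyI : (X 1 : MvPowerSeries (Fin 2) K) ^ t ∈ I := by simpa [h0] using hgI ⟨0, hs⟩
  have hQI : Q ≤ I := hQ ▸ Ideal.span_le.mpr (by simp [Set.insert_subset_iff, hxI, hyI])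
  refine ⟨⟨s * t, ?_⟩, fun hQlt hIlt hI2 => ?_⟩
  · subst hI
    simpa using Ideal.span_range_pow_succ_eq_mul _ t hQI fun i =>
      hQ ▸ Ideal.monomial_pow_succ_mem_span_pow_pair_mul (hn i) hxI hyI (hgI i)
  obtain ⟨a, ha, haI⟩ : ∃ a ≤ t, (X 0 : MvPowerSeries (Fin 2) K) ^ a * X 1 ^ (t - a) ∉ I := by
    simpa using mt Ideal.span_pair_pow_le_iff.mpr hIlt.not_ge
  refine redNum_eq_of_forall_lt ?_ fun j hj => ?_
  · refine le_antisymm ?_ ((Ideal.mul_mono_left hQI).trans_eq (pow_succ' I 2).symm)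
    calc I ^ (2 + 1) = Ideal.span {X 0, X 1} ^ (2 * t) * I := by rw [pow_succ, hI2]
      _ ≤ Ideal.span {X 0, X 1} ^ (t + 2 * t) := by rw [pow_add, mul_comm]; gcongr
      _ ≤ Q * I ^ 2 := hQ ▸ hI2 ▸ Ideal.span_pair_pow_add_le_mul (by omega)
  interval_cases j
  · simpa using hQlt.ne'
  · intro hQI1
    have hmem : X 0 ^ t * (X 0 ^ a * X 1 ^ (t - a)) ∈ Ideal.span {X 0 ^ t, X 1 ^ t} * I := by
      rw [← hQ, ← pow_one I, ← hQI1, hI2, ← mul_assoc, ← pow_add]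
      convert Ideal.span_pair_pow_le_iff.mp
        (le_refl (Ideal.span {(X 0 : MvPowerSeries (Fin 2) K), X 1} ^ (2 * t))) (t + a) (by omega)
        using 3
      omega
    exact haI (Ideal.mem_of_mul_mem_span_pair_mul hyI
      (fun v => X_pow_dvd_of_dvd_X_pow_mul (i := 1) (j := 0) (by decide)) hmem)
end
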